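/- arXiv:2004.11955 — 3 statements merged into one kernel-verified Lean document; each statement's English description precedes it below -/
import Mathlib

section
/- Let C = [-1,1] × {0} ⊆ ℝ². Let Ω ⊆ ℝ² be a bounded open set with C ⊆ Ω which satisfies the C-SP property: for every x ∈ (frontier Ω) \ C, the cone K_x = {y ∈ ℝ² : ∀ c ∈ C, ⟨y - x, c - x⟩ ≤ 0} satisfies K_x ∩ Ω = ∅. Then Ω is convex in the direction Oy: for every α ∈ ℝ, the vertical section {t ∈ ℝ : (α, t) ∈ Ω} is order-connected (i.e., whenever t₁ < t < t₂ and (α, t₁) ∈ Ω and (α, t₂) ∈ Ω, then (α, t) ∈ Ω). -/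
/-!
Fix a vertical line `x = α`. If `(α, t) ∉ Ω` with `t ≥ 0` while `(α, t₂) ∈ Ω` for some `t₂ > t`,
the segment between them crosses `∂Ω` at some `(α, u)` with `0 ≤ u ≤ t₂`. This point is not in
`C ⊆ Ω`, and `(α, t₂)` lies in its cone, since `⟨(0, t₂ - u), c - (α, u)⟩ = -u (t₂ - u) ≤ 0` for
every `c ∈ C`: this contradicts the `C`-SP property. The case `t ≤ 0` is symmetric, with `t₁`.
-/

open Set
open scoped RealInnerProductSpace

/-- The point `(a, b)` of the Euclidean plane. -/
noncomputable def pt (a b : ℝ) : EuclideanSpace ℝ (Fin 2) := WithLp.toLp 2 ![a, b]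

/-- The segment `C = [-1,1] × {0}` in the Euclidean plane. -/
def segC : Set (EuclideanSpace ℝ (Fin 2)) :=
  {p | p 0 ∈ Set.Icc (-1 : ℝ) 1 ∧ p 1 = 0}

/-- The cone `K_x = {y : ∀ c ∈ C, ⟨y - x, c - x⟩ ≤ 0}`. -/
noncomputable def coneK (x : EuclideanSpace ℝ (Fin 2)) : Set (EuclideanSpace ℝ (Fin 2)) :=
  {y | ∀ c ∈ segC, ⟪y - x, c - x⟫ ≤ 0}

theorem IsPreconnected.inter_frontier_nonempty {X : Type*} [TopologicalSpace X] {s t : Set X}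
    (hs : IsPreconnected s) (hst : (s ∩ t).Nonempty) (hsdt : (s \ t).Nonempty) :
    (s ∩ frontier t).Nonempty := by
  -- otherwise `interior t` and `(closure t)ᶜ` would separate `s`
  by_contra h
  have hint : ∀ x ∈ s, x ∈ closure t → x ∈ interior t := fun x hx hxc => by
    by_contra hxi
    exact h ⟨x, hx, hxc, hxi⟩
  obtain ⟨x, hxs, hxt⟩ := hst
  obtain ⟨y, hys, hyt⟩ := hsdt
  obtain ⟨z, -, hzi, hzc⟩ := hs (interior t) (closure t)ᶜ isOpen_interior
    isClosed_closure.isOpen_compl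
    (fun z hz => (em (z ∈ closure t)).imp (hint z hz) id)
    ⟨x, hxs, hint x hxs (subset_closure hxt)⟩
    ⟨y, hys, fun hyc => hyt (interior_subset (hint y hys hyc))⟩
  exact hzc (subset_closure (interior_subset hzi))

theorem continuous_pt (α : ℝ) : Continuous (pt α) :=
  (PiLp.continuous_toLp 2 _).comp <| continuous_pi fun i => by fin_cases i <;> fun_prop

theorem pt_mem_coneK_pt {α u v : ℝ} (h : 0 ≤ u * (v - u)) : pt α v ∈ coneK (pt α u) := by
  intro c hc
  simp only [pt, PiLp.inner_apply, PiLp.sub_apply, RCLike.inner_apply, Real.ringHom_apply,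
    Fin.sum_univ_two, Fin.isValue, Matrix.cons_val_zero, sub_self, mul_zero, hc.2,
    Matrix.cons_val_one, Matrix.cons_val_fin_one, zero_sub, neg_mul, zero_add,
    Left.neg_nonpos_iff]
  nlinarith

theorem pt_mem_of_forall_uIcc_mem_coneK {Ω : Set (EuclideanSpace ℝ (Fin 2))} (hΩo : IsOpen Ω)
    (hCΩ : segC ⊆ Ω) (hSP : ∀ x ∈ frontier Ω \ segC, coneK x ∩ Ω = ∅) {α a b : ℝ}
    (hb : pt α b ∈ Ω) (hcone : ∀ u ∈ uIcc a b, pt α b ∈ coneK (pt α u)) : pt α a ∈ Ω := by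
  by_contra ha
  obtain ⟨-, ⟨u, hu, rfl⟩, hfr⟩ :=
    (isPreconnected_uIcc.image (pt α) (continuous_pt α).continuousOn).inter_frontier_nonempty
      ⟨pt α b, mem_image_of_mem _ right_mem_uIcc, hb⟩
      ⟨pt α a, mem_image_of_mem _ left_mem_uIcc, ha⟩
  have hu_notMem : pt α u ∉ Ω := fun hu => (hΩo.inter_frontier_eq.subset ⟨hu, hfr⟩ :)
  exact (hSP _ ⟨hfr, fun hC => hu_notMem (hCΩ hC)⟩).subset ⟨hcone u hu, hb⟩

theorem stmt0_general (Ω : Set (EuclideanSpace ℝ (Fin 2)))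
    (hΩo : IsOpen Ω) (hCΩ : segC ⊆ Ω)
    (hSP : ∀ x ∈ frontier Ω \ segC, coneK x ∩ Ω = ∅) :
    ∀ α t₁ t t₂ : ℝ, t₁ < t → t < t₂ → pt α t₁ ∈ Ω → pt α t₂ ∈ Ω → pt α t ∈ Ω := by
  intro α t₁ t t₂ ht₁ ht₂ h₁ h₂
  rcases le_total 0 t with ht | ht
  · refine pt_mem_of_forall_uIcc_mem_coneK hΩo hCΩ hSP h₂ fun u hu => pt_mem_coneK_pt ?_
    rw [uIcc_of_le ht₂.le] at hu
    exact mul_nonneg (ht.trans hu.1) (sub_nonneg.2 hu.2)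
  · refine pt_mem_of_forall_uIcc_mem_coneK hΩo hCΩ hSP h₁ fun u hu => pt_mem_coneK_pt ?_
    rw [uIcc_of_ge ht₁.le] at hu
    exact mul_nonneg_of_nonpos_of_nonpos (hu.2.trans ht) (sub_nonpos.2 hu.1)

/-- If a bounded open set `Ω ⊆ ℝ²` contains the segment `C = [-1,1] × {0}` and satisfies the
`C`-SP property (for every `x ∈ ∂Ω \ C`, the cone `K_x` misses `Ω`), then `Ω` is convex in the
`Oy` direction: every vertical section of `Ω` is order-connected. -/
theorem stmt0 (Ω : Set (EuclideanSpace ℝ (Fin 2)))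
    (hΩo : IsOpen Ω) (hΩb : Bornology.IsBounded Ω) (hCΩ : segC ⊆ Ω)
    (hSP : ∀ x ∈ frontier Ω \ segC, coneK x ∩ Ω = ∅) :
    ∀ α t₁ t t₂ : ℝ, t₁ < t → t < t₂ → pt α t₁ ∈ Ω → pt α t₂ ∈ Ω → pt α t ∈ Ω :=
  stmt0_general Ω hΩo hCΩ hSP
end

section
/- Let Ω ⊆ ℝ² be a bounded open set. Then the one-dimensional Hausdorff measure of the part of the frontier of Ω lying in the open upper half-plane is at least the Lebesgue measure of the horizontal section of Ω at height 0: H¹((frontier Ω) ∩ {(x, y) ∈ ℝ² : y > 0}) ≥ Leb¹({x ∈ ℝ : (x, 0) ∈ Ω}). -/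
/-!
For `(x, 0) ∈ Ω` the set `{t | (x, t) ∈ Ω}` is open, bounded and contains `0`, so its supremum
`t > 0` gives a frontier point `(x, t)` of `Ω` in the upper half-plane.
Hence the first-coordinate projection, which is `1`-Lipschitz, maps that part of the frontier onto
a superset of the section `{x | (x, 0) ∈ Ω}`, and Lipschitz maps do not increase `μH[1]`.
-/

open Set MeasureTheory

@[simp] lemma pt_apply_zero (a b : ℝ) : pt a b 0 = a := rfl

@[simp] lemma pt_apply_one (a b : ℝ) : pt a b 1 = b := rfl

lemma pt_add_smul_pt_zero_one (x t : ℝ) : pt x 0 + t • pt 0 1 = pt x t := by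
  ext i
  fin_cases i <;> simp

lemma PiLp.lipschitzWith_apply {p : ENNReal} [Fact (1 ≤ p)] {ι : Type*} [Fintype ι]
    {β : ι → Type*} [∀ i, PseudoEMetricSpace (β i)] (i : ι) :
    LipschitzWith 1 (fun x : PiLp p β ↦ x i) := by
  have h := (LipschitzWith.eval (α := β) i).comp (PiLp.lipschitzWith_ofLp p β)
  rwa [mul_one] at h

lemma IsOpen.csSup_notMem {V : Set ℝ} (hV : IsOpen V) (hbdd : BddAbove V) : sSup V ∉ V := by
  intro hmem
  have hright : ∀ᶠ y in nhdsWithin (sSup V) (Ioi (sSup V)), y ∈ V ∧ sSup V < y :=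
    Filter.Eventually.and (nhdsWithin_le_nhds (hV.mem_nhds hmem)) self_mem_nhdsWithin
  obtain ⟨y, hyV, hy⟩ := hright.exists
  exact (le_csSup hbdd hyV).not_gt hy

lemma IsOpen.exists_pos_mem_frontier {V : Set ℝ} (hV : IsOpen V) (hbdd : BddAbove V)
    (h0 : (0 : ℝ) ∈ V) : ∃ t > 0, t ∈ frontier V := by
  have hsup : sSup V ∉ V := hV.csSup_notMem hbdd
  refine ⟨sSup V, (le_csSup hbdd h0).lt_of_ne fun h ↦ hsup (h ▸ h0), ?_⟩
  rw [hV.frontier_eq]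
  exact ⟨csSup_mem_closure ⟨0, h0⟩ hbdd, hsup⟩

section NormedSpace

variable {E : Type*} [NormedAddCommGroup E] [NormedSpace ℝ E]

lemma antilipschitzWith_add_smul (a : E) {v : E} (hv : v ≠ 0) :
    AntilipschitzWith ‖v‖₊⁻¹ (fun t : ℝ ↦ a + t • v) := by
  refine AntilipschitzWith.of_le_mul_dist fun s t ↦ ?_
  rw [dist_add_left, dist_eq_norm, dist_eq_norm, ← sub_smul, norm_smul, NNReal.coe_inv,
    coe_nnnorm, mul_comm ‖s - t‖, inv_mul_cancel_left₀ (norm_ne_zero_iff.mpr hv)]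

lemma IsOpen.exists_pos_add_smul_mem_frontier {U : Set E} (hU : IsOpen U)
    (hb : Bornology.IsBounded U) {a v : E} (ha : a ∈ U) (hv : v ≠ 0) :
    ∃ t : ℝ, 0 < t ∧ a + t • v ∈ frontier U := by
  have hcont : Continuous fun t : ℝ ↦ a + t • v := by fun_prop
  obtain ⟨t, ht, hfr⟩ := (hU.preimage hcont).exists_pos_mem_frontier
    ((antilipschitzWith_add_smul a hv).isBounded_preimage hb).bddAbove (by simpa using ha)
  exact ⟨t, ht, hcont.frontier_preimage_subset U hfr⟩

end NormedSpace

/-- For a bounded open set `Ω ⊆ ℝ²`, the one-dimensional Hausdorff measure of the part of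
`∂Ω` lying in the open upper half-plane is at least the Lebesgue measure of the horizontal
section `{x : (x,0) ∈ Ω}`. -/
theorem stmt3 (Ω : Set (EuclideanSpace ℝ (Fin 2)))
    (hΩo : IsOpen Ω) (hΩb : Bornology.IsBounded Ω) :
    volume {x : ℝ | pt x 0 ∈ Ω} ≤
      μH[1] (frontier Ω ∩ {p : EuclideanSpace ℝ (Fin 2) | 0 < p 1}) := by
  set S := frontier Ω ∩ {p : EuclideanSpace ℝ (Fin 2) | 0 < p 1}
  have hsection : {x : ℝ | pt x 0 ∈ Ω} ⊆ (fun p : EuclideanSpace ℝ (Fin 2) ↦ p 0) '' S := by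
    intro x hx
    obtain ⟨t, ht, hfr⟩ := hΩo.exists_pos_add_smul_mem_frontier hΩb hx (v := pt 0 1)
      fun h ↦ by simpa using congrArg (· 1) h
    rw [pt_add_smul_pt_zero_one] at hfr
    exact ⟨pt x t, ⟨hfr, ht⟩, rfl⟩
  have hproj : LipschitzWith 1 fun p : EuclideanSpace ℝ (Fin 2) ↦ p 0 :=
    PiLp.lipschitzWith_apply 0
  calc volume {x : ℝ | pt x 0 ∈ Ω}
      = μH[1] {x : ℝ | pt x 0 ∈ Ω} := by rw [hausdorffMeasure_real]
    _ ≤ μH[1] ((fun p : EuclideanSpace ℝ (Fin 2) ↦ p 0) '' S) := measure_mono hsection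
    _ ≤ μH[1] S := by simpa using hproj.hausdorffMeasure_image_le zero_le_one S
end

section
/- Let a ∈ ℝ, let ε₀ > 0, and let U ⊆ ℝ² be an open set containing the closed rectangle [-1-ε₀, 1+ε₀] × [-ε₀, ε₀]. Let h : ℝ² → ℝ be twice continuously differentiable and harmonic on U (i.e., ∂²h/∂x² + ∂²h/∂y² = 0 on U), and define u(x, y) = h(x, y) - (a/2)·|y|. For 0 < ε ≤ ε₀, define the outward flux of ∇u through the boundary of the rectangle V_ε = [-1-ε, 1+ε] × [-ε, ε] by Flux(ε) = ∫_{-1-ε}^{1+ε} (∂u/∂y(x, ε) - ∂u/∂y(x, -ε)) dx + ∫_{-ε}^{ε} (∂u/∂x(1+ε, y) - ∂u/∂x(-1-ε, y)) dy, where the y-derivatives of u at y = ±ε are ∂h/∂y(x, ±ε) ∓ a/2. Then Flux(ε) tends to -2a as ε → 0⁺. -/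
/-!
The partial derivatives of `h` are continuous on the compact rectangle `[-1-ε₀, 1+ε₀] × [-ε₀, ε₀]`,
hence uniformly continuous there. On the horizontal edges, `∂h/∂y(x, ε) - ∂h/∂y(x, -ε) → 0`
uniformly in `x`, and the vertical edges have length `2ε` with bounded integrand, so only the
jump `-a` of `∂u/∂y` across `y = 0` survives: its integral over `[-1-ε, 1+ε]` is
`-a (2 + 2ε) → -2a`.
-/

open Set Filter Topology Interval

section PartialDeriv

variable {E : Type*} [NormedAddCommGroup E] [NormedSpace ℝ E] {h : ℝ × ℝ → E}

theorem DifferentiableAt.deriv_comp_prodMk_fst {x y : ℝ} (hd : DifferentiableAt ℝ h (x, y)) :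
    deriv (fun r => h (r, y)) x = fderiv ℝ h (x, y) (1, 0) :=
  (hd.hasFDerivAt.comp_hasDerivAt x ((hasDerivAt_id x).prodMk (hasDerivAt_const x y))).deriv

theorem DifferentiableAt.deriv_comp_prodMk_snd {x y : ℝ} (hd : DifferentiableAt ℝ h (x, y)) :
    deriv (fun r => h (x, r)) y = fderiv ℝ h (x, y) (0, 1) :=
  (hd.hasFDerivAt.comp_hasDerivAt y ((hasDerivAt_const y x).prodMk (hasDerivAt_id y))).deriv

variable {U : Set (ℝ × ℝ)}

theorem ContDiffOn.continuousOn_deriv_comp_prodMk_fst (hh : ContDiffOn ℝ 1 h U) (hU : IsOpen U) :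
    ContinuousOn (fun p => deriv (fun r => h (r, p.2)) p.1) U :=
  ((hh.continuousOn_fderiv_of_isOpen hU le_rfl).clm_apply continuousOn_const).congr
    fun p hp => ((hh.differentiableOn one_ne_zero p hp).differentiableAt
      (hU.mem_nhds hp)).deriv_comp_prodMk_fst

theorem ContDiffOn.continuousOn_deriv_comp_prodMk_snd (hh : ContDiffOn ℝ 1 h U) (hU : IsOpen U) :
    ContinuousOn (fun p => deriv (fun r => h (p.1, r)) p.2) U :=
  ((hh.continuousOn_fderiv_of_isOpen hU le_rfl).clm_apply continuousOn_const).congr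
    fun p hp => ((hh.differentiableOn one_ne_zero p hp).differentiableAt
      (hU.mem_nhds hp)).deriv_comp_prodMk_snd

end PartialDeriv

theorem tendstoUniformlyOn_sub_comp_neg {α E : Type*} [PseudoMetricSpace α]
    [SeminormedAddCommGroup E] {g : α × ℝ → E} {s : Set α} {r : ℝ} (hs : IsCompact s)
    (hr : 0 < r) (hg : ContinuousOn g (s ×ˢ Icc (-r) r)) :
    TendstoUniformlyOn (fun ε x => g (x, ε) - g (x, -ε)) 0 (𝓝 0) s := by
  have hu := (hs.prod isCompact_Icc).uniformContinuousOn_of_continuous hg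
  rw [Metric.tendstoUniformlyOn_iff]
  intro η hη
  obtain ⟨δ, hδ, hgδ⟩ := Metric.uniformContinuousOn_iff.1 hu η hη
  filter_upwards [Metric.ball_mem_nhds (0 : ℝ) (lt_min hr (half_pos hδ))] with ε hε x hx
  obtain ⟨⟨hεr, hrε⟩, hεδ, hδε⟩ : (-r < ε ∧ ε < r) ∧ -(δ / 2) < ε ∧ ε < δ / 2 := by
    simpa only [mem_ball_zero_iff, Real.norm_eq_abs, lt_min_iff, abs_lt] using hε
  rw [Pi.zero_apply, dist_zero_left, ← dist_eq_norm]
  refine hgδ _ ⟨hx, ?_, ?_⟩ _ ⟨hx, ?_, ?_⟩ ?_ <;> try linarith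
  rw [Prod.dist_eq, dist_self, Real.dist_eq]
  exact max_lt hδ (abs_lt.2 ⟨by linarith, by linarith⟩)

section IntervalIntegral

variable {ι E : Type*} [NormedAddCommGroup E] [NormedSpace ℝ E] {l : Filter ι}

theorem TendstoUniformlyOn.tendsto_intervalIntegral_zero {F : ι → ℝ → E} {s : Set ℝ}
    {a b : ι → ℝ} {L : ℝ} (hF : TendstoUniformlyOn F 0 l s)
    (hs : ∀ᶠ i in l, Ι (a i) (b i) ⊆ s) (hlen : ∀ᶠ i in l, |b i - a i| ≤ L) :
    Tendsto (fun i => ∫ x in a i..b i, F i x) l (𝓝 0) := by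
  rw [Metric.tendsto_nhds]
  intro η hη
  have hL : 0 < |L| + 1 := by positivity
  filter_upwards [Metric.tendstoUniformlyOn_iff.1 hF _ (div_pos hη hL), hs, hlen]
    with i hFi hsi hleni
  have hbound : ∀ x ∈ Ι (a i) (b i), ‖F i x‖ ≤ η / (|L| + 1) := fun x hx => by
    simpa only [Pi.zero_apply, dist_zero_left] using (hFi x (hsi hx)).le
  calc dist (∫ x in a i..b i, F i x) 0 ≤ η / (|L| + 1) * |b i - a i| := by
        rw [dist_zero_right]
        exact intervalIntegral.norm_integral_le_of_norm_le_const hbound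
    _ ≤ η / (|L| + 1) * |L| :=
        mul_le_mul_of_nonneg_left (hleni.trans (le_abs_self L)) (by positivity)
    _ < η := by
        rw [div_mul_eq_mul_div, div_lt_iff₀ hL]
        exact mul_lt_mul_of_pos_left (lt_add_one _) hη

theorem tendsto_intervalIntegral_neg_self_zero {l : Filter ℝ} (hl : l ≤ 𝓝 0) {F : ℝ → ℝ → E}
    {M : ℝ} (hF : ∀ᶠ ε in l, ∀ y ∈ Ι (-ε) ε, ‖F ε y‖ ≤ M) :
    Tendsto (fun ε => ∫ y in -ε..ε, F ε y) l (𝓝 0) := by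
  refine squeeze_zero_norm'
    (hF.mono fun ε hε => intervalIntegral.norm_integral_le_of_norm_le_const hε) ?_
  have : Continuous fun ε : ℝ => M * |ε - -ε| := by fun_prop
  simpa using (this.tendsto 0).mono_left hl

end IntervalIntegral

section Rectangle

variable {E : Type*} [NormedAddCommGroup E] {c r : ℝ}

def rectangle (c ε : ℝ) : Set (ℝ × ℝ) := Icc (-c - ε) (c + ε) ×ˢ Icc (-ε) ε

theorem uIcc_prod_uIcc_subset_rectangle (hc : 0 ≤ c) {ε : ℝ} (hε : ε ∈ Icc 0 r) :
    uIcc (-c - ε) (c + ε) ×ˢ uIcc (-ε) ε ⊆ rectangle c r := by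
  rw [uIcc_of_le (by linarith [hε.1]), uIcc_of_le (by linarith [hε.1])]
  exact prod_mono (Icc_subset_Icc (by linarith [hε.2]) (by linarith [hε.2]))
    (Icc_subset_Icc (by linarith [hε.2]) hε.2)

theorem intervalIntegrable_sub_comp_neg (hc : 0 ≤ c) {g : ℝ × ℝ → E}
    (hg : ContinuousOn g (rectangle c r)) {ε : ℝ} (hε : ε ∈ Icc 0 r) :
    IntervalIntegrable (fun x => g (x, ε) - g (x, -ε)) MeasureTheory.volume (-c - ε) (c + ε) := by
  have hsub := uIcc_prod_uIcc_subset_rectangle hc hε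
  exact ((hg.comp (continuous_id.prodMk continuous_const).continuousOn
      fun _ hx => hsub (mk_mem_prod hx right_mem_uIcc)).sub
    (hg.comp (continuous_id.prodMk continuous_const).continuousOn
      fun _ hx => hsub (mk_mem_prod hx left_mem_uIcc))).intervalIntegrable

theorem tendsto_intervalIntegral_horizontal_edges [NormedSpace ℝ E] (hc : 0 ≤ c) (hr : 0 < r)
    {g : ℝ × ℝ → E} (hg : ContinuousOn g (rectangle c r)) :
    Tendsto (fun ε => ∫ x in (-c - ε)..(c + ε), g (x, ε) - g (x, -ε)) (𝓝[Ioc 0 r] 0) (𝓝 0) := by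
  refine TendstoUniformlyOn.tendsto_intervalIntegral_zero (L := 2 * c + 2 * r)
    (fun u hu => nhdsWithin_le_nhds (tendstoUniformlyOn_sub_comp_neg isCompact_Icc hr hg u hu))
    ?_ ?_ <;>
  filter_upwards [self_mem_nhdsWithin] with ε hε
  · exact fun x hx => (uIcc_prod_uIcc_subset_rectangle hc (Ioc_subset_Icc_self hε)
      (mk_mem_prod (uIoc_subset_uIcc hx) right_mem_uIcc)).1
  · rw [abs_of_nonneg (by linarith [hε.1])]
    linarith [hε.2]

theorem tendsto_intervalIntegral_vertical_edges [NormedSpace ℝ E] (hc : 0 ≤ c) {f : ℝ × ℝ → E}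
    (hf : ContinuousOn f (rectangle c r)) :
    Tendsto (fun ε => ∫ y in (-ε)..ε, f (c + ε, y) - f (-c - ε, y)) (𝓝[Ioc 0 r] 0) (𝓝 0) := by
  obtain ⟨M, hM⟩ := (isCompact_Icc.prod isCompact_Icc).exists_bound_of_continuousOn hf
  refine tendsto_intervalIntegral_neg_self_zero nhdsWithin_le_nhds (M := M + M) ?_
  filter_upwards [self_mem_nhdsWithin] with ε hε y hy
  have hsub := uIcc_prod_uIcc_subset_rectangle hc (Ioc_subset_Icc_self hε)
  exact (norm_sub_le _ _).trans
    (add_le_add (hM _ (hsub (mk_mem_prod right_mem_uIcc (uIoc_subset_uIcc hy))))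
      (hM _ (hsub (mk_mem_prod left_mem_uIcc (uIoc_subset_uIcc hy)))))

end Rectangle

theorem stmt5_general (a ε₀ : ℝ) (hε₀ : 0 < ε₀) (U : Set (ℝ × ℝ)) (hU : IsOpen U)
    (hrect : (Icc (-1 - ε₀) (1 + ε₀) ×ˢ Icc (-ε₀) ε₀) ⊆ U)
    (h : ℝ × ℝ → ℝ) (hh : ContDiffOn ℝ 2 h U)
    (Flux : ℝ → ℝ)
    (hFlux : ∀ ε ∈ Ioc (0 : ℝ) ε₀, Flux ε =
      (∫ x in (-1 - ε)..(1 + ε),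
        ((deriv (fun r => h (x, r)) ε - a / 2) - (deriv (fun r => h (x, r)) (-ε) + a / 2))) +
      ∫ y in (-ε)..ε,
        (deriv (fun r => h (r, y)) (1 + ε) - deriv (fun r => h (r, y)) (-1 - ε))) :
    Tendsto Flux (nhdsWithin 0 (Ioc (0 : ℝ) ε₀)) (nhds (-2 * a)) := by
  set f : ℝ × ℝ → ℝ := fun p => deriv (fun r => h (r, p.2)) p.1
  set g : ℝ × ℝ → ℝ := fun p => deriv (fun r => h (p.1, r)) p.2
  have hf : ContinuousOn f (rectangle 1 ε₀) :=
    ((hh.of_le one_le_two).continuousOn_deriv_comp_prodMk_fst hU).mono hrect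
  have hg : ContinuousOn g (rectangle 1 ε₀) :=
    ((hh.of_le one_le_two).continuousOn_deriv_comp_prodMk_snd hU).mono hrect
  have hsplit : ∀ ε ∈ Ioc 0 ε₀, Flux ε =
      (∫ x in (-1 - ε)..(1 + ε), g (x, ε) - g (x, -ε)) - a * (2 + 2 * ε) +
        ∫ y in (-ε)..ε, f (1 + ε, y) - f (-1 - ε, y) := by
    intro ε hε
    have hconst : ∫ _ in (-1 - ε)..(1 + ε), a = a * (2 + 2 * ε) := by
      rw [intervalIntegral.integral_const, smul_eq_mul]
      ring
    rw [hFlux ε hε, ← hconst, ← intervalIntegral.integral_sub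
      (intervalIntegrable_sub_comp_neg zero_le_one hg (Ioc_subset_Icc_self hε))
      intervalIntegrable_const]
    congr 2
    funext x
    ring
  have hjump : Tendsto (fun ε : ℝ => a * (2 + 2 * ε)) (𝓝[Ioc 0 ε₀] 0) (𝓝 (a * (2 + 2 * 0))) :=
    (Continuous.tendsto (by fun_prop) 0).mono_left nhdsWithin_le_nhds
  have hlim := ((tendsto_intervalIntegral_horizontal_edges zero_le_one hε₀ hg).sub hjump).add
    (tendsto_intervalIntegral_vertical_edges zero_le_one hf)
  rw [show (0 : ℝ) - a * (2 + 2 * 0) + 0 = -2 * a by ring] at hlim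
  exact hlim.congr' (eventually_nhdsWithin_of_forall fun ε hε => (hsplit ε hε).symm)

/-- Let `h` be `C²` and harmonic on an open set `U ⊆ ℝ²` containing the closed rectangle
`[-1-ε₀, 1+ε₀] × [-ε₀, ε₀]`, and let `u(x,y) = h(x,y) - (a/2)|y|`. The outward flux of `∇u`
through the boundary of the rectangle `V_ε = [-1-ε, 1+ε] × [-ε, ε]` (where for `0 < ε` the
`y`-derivatives of `u` on the horizontal edges `y = ±ε` are `∂h/∂y(x, ±ε) ∓ a/2` and the
`x`-derivatives are those of `h`) tends to `-2a` as `ε → 0⁺`. -/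
theorem stmt5 (a ε₀ : ℝ) (hε₀ : 0 < ε₀) (U : Set (ℝ × ℝ)) (hU : IsOpen U)
    (hrect : (Icc (-1 - ε₀) (1 + ε₀) ×ˢ Icc (-ε₀) ε₀) ⊆ U)
    (h : ℝ × ℝ → ℝ) (hh : ContDiffOn ℝ 2 h U)
    (hharm : ∀ p ∈ U,
      deriv (fun s => deriv (fun r => h (r, p.2)) s) p.1 +
        deriv (fun s => deriv (fun r => h (p.1, r)) s) p.2 = 0)
    (Flux : ℝ → ℝ)
    (hFlux : ∀ ε ∈ Ioc (0 : ℝ) ε₀, Flux ε =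
      (∫ x in (-1 - ε)..(1 + ε),
        ((deriv (fun r => h (x, r)) ε - a / 2) - (deriv (fun r => h (x, r)) (-ε) + a / 2))) +
      ∫ y in (-ε)..ε,
        (deriv (fun r => h (r, y)) (1 + ε) - deriv (fun r => h (r, y)) (-1 - ε))) :
    Tendsto Flux (nhdsWithin 0 (Ioc (0 : ℝ) ε₀)) (nhds (-2 * a)) :=
  stmt5_general a ε₀ hε₀ U hU hrect h hh Flux hFlux
end
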